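/- arXiv:2402.02605 — 2 statements merged into one kernel-verified Lean document; each statement's English description precedes it below -/
import Mathlib

section
/- If C is a category with exactly one object (i.e., a finite monoid), then the embedding Ψ : R[C] → R(x) ⊗_τ kC is an isomorphism of k-algebras. -/
open CategoryTheory TensorProduct

variable (k : Type) [Field k]
variable (C : Type) [SmallCategory C] [Fintype C] [DecidableEq C]
  [∀ x y : C, Fintype (x ⟶ y)] [∀ x y : C, DecidableEq (x ⟶ y)]

abbrev Mor (C : Type) [SmallCategory C] : Type := Σ x y : C, x ⟶ y

def compMor {C : Type} [SmallCategory C] (g f : Mor C) (h : g.1 = f.2.1) : Mor C :=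
  ⟨f.1, g.2.1, f.2.2 ≫ eqToHom h.symm ≫ g.2.2⟩

/-- The category algebra `kC` (as a `k`-vector space with basis `Mor C`). -/
abbrev CatAlg : Type := Mor C →₀ k

/-- Product of two basis elements of the category algebra. -/
noncomputable def catMulSingle (g f : Mor C) : CatAlg k C :=
  if h : g.1 = f.2.1 then Finsupp.single (compMor g f h) 1 else 0

/-- The multiplication of the category algebra, as a bilinear map. -/
noncomputable def catMulL : CatAlg k C →ₗ[k] CatAlg k C →ₗ[k] CatAlg k C :=
  Finsupp.lsum k fun g => LinearMap.toSpanSingleton k _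
    (Finsupp.lsum k fun f => LinearMap.toSpanSingleton k _ (catMulSingle k C g f))

/-- The identity `∑_{x ∈ Ob C} 1_x` of the category algebra. -/
noncomputable def catOne : CatAlg k C := ∑ x : C, Finsupp.single ⟨x, x, 𝟙 x⟩ 1

variable (R : C ⥤ AlgCat k)

/-- `A = ⨂_{x ∈ Ob C} R(x)`. -/
abbrev TensA : Type := ⨂[k] x : C, R.obj x

/-- `μ_A`, the multiplication of `A = ⨂_x R(x)`. -/
noncomputable def muA : TensA k C R ⊗[k] TensA k C R →ₗ[k] TensA k C R :=
  LinearMap.mul' k _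

/-- `μ_B`, the multiplication of `B = kC`. -/
noncomputable def muB : CatAlg k C ⊗[k] CatAlg k C →ₗ[k] CatAlg k C :=
  TensorProduct.lift (catMulL k C)

section Twist
variable {A B : Type} [AddCommGroup A] [AddCommGroup B] [Module k A] [Module k B]

/-- The Čap–Schichl–Vaňžura twisting-map conditions for a linear map
`τ : B ⊗ A → A ⊗ B`, with respect to multiplications `μA, μB` and units `oneA, oneB`. -/
def IsTwistingMap (μA : A ⊗[k] A →ₗ[k] A) (μB : B ⊗[k] B →ₗ[k] B) (oneA : A) (oneB : B)
    (τ : B ⊗[k] A →ₗ[k] A ⊗[k] B) : Prop :=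
  (∀ b : B, τ (b ⊗ₜ oneA) = oneA ⊗ₜ b) ∧
  (∀ a : A, τ (oneB ⊗ₜ a) = a ⊗ₜ oneB) ∧
  (τ ∘ₗ TensorProduct.map μB μA =
    TensorProduct.map μA μB
    ∘ₗ (TensorProduct.assoc k A A (B ⊗[k] B)).symm.toLinearMap
    ∘ₗ LinearMap.lTensor A (TensorProduct.assoc k A B B).toLinearMap
    ∘ₗ LinearMap.lTensor A (LinearMap.rTensor B τ)
    ∘ₗ LinearMap.lTensor A (TensorProduct.assoc k B A B).symm.toLinearMap
    ∘ₗ (TensorProduct.assoc k A B (A ⊗[k] B)).toLinearMap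
    ∘ₗ TensorProduct.map τ τ
    ∘ₗ (TensorProduct.assoc k (B ⊗[k] A) B A).toLinearMap
    ∘ₗ LinearMap.rTensor A (TensorProduct.assoc k B A B).symm.toLinearMap
    ∘ₗ (TensorProduct.assoc k B (A ⊗[k] B) A).symm.toLinearMap
    ∘ₗ LinearMap.lTensor B (LinearMap.rTensor A τ)
    ∘ₗ LinearMap.lTensor B (TensorProduct.assoc k B A A).symm.toLinearMap
    ∘ₗ (TensorProduct.assoc k B B (A ⊗[k] A)).toLinearMap)

/-- The twisted-tensor-product multiplication
`μ_τ = (μ_A ⊗ μ_B) ∘ (id_A ⊗ τ ⊗ id_B)` on `A ⊗ B`. -/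
noncomputable def muTau (μA : A ⊗[k] A →ₗ[k] A) (μB : B ⊗[k] B →ₗ[k] B)
    (τ : B ⊗[k] A →ₗ[k] A ⊗[k] B) :
    (A ⊗[k] B) ⊗[k] (A ⊗[k] B) →ₗ[k] A ⊗[k] B :=
  TensorProduct.map μA μB
  ∘ₗ (TensorProduct.assoc k A A (B ⊗[k] B)).symm.toLinearMap
  ∘ₗ LinearMap.lTensor A (TensorProduct.assoc k A B B).toLinearMap
  ∘ₗ LinearMap.lTensor A (LinearMap.rTensor B τ)
  ∘ₗ LinearMap.lTensor A (TensorProduct.assoc k B A B).symm.toLinearMap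
  ∘ₗ (TensorProduct.assoc k A B (A ⊗[k] B)).toLinearMap

end Twist

/-- The defining formula of the twisting map `τ` of Proposition 2.1: on a basis element
`f ⊗ (⨂_x r_x)` it returns `(⨂_t r'_t) ⊗ f`, where `r'_{c(f)} = R(f)(r_{d(f)})` and
`r'_t = r_t` for `t ≠ c(f)`. -/
def TauFormula (τ : CatAlg k C ⊗[k] TensA k C R →ₗ[k] TensA k C R ⊗[k] CatAlg k C) : Prop :=
  ∀ (f : Mor C) (r : ∀ x : C, R.obj x),
    τ (Finsupp.single f 1 ⊗ₜ PiTensorProduct.tprod k r) =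
      (PiTensorProduct.tprod k (Function.update r f.2.1 (R.map f.2.2 (r f.1)))) ⊗ₜ
        Finsupp.single f 1

/-- Underlying space of the skew category algebra `R[C]`. -/
def SkewAlg : Type := ∀ f : Mor C, R.obj f.2.1

noncomputable instance : AddCommGroup (SkewAlg k C R) := by unfold SkewAlg; infer_instance
noncomputable instance : Module k (SkewAlg k C R) := by unfold SkewAlg; infer_instance

/-- The basis-type element `r·f` of the skew category algebra. -/
noncomputable def skSingle (f : Mor C) (r : R.obj f.2.1) : SkewAlg k C R :=
  fun h => if hh : f = h then cast (congrArg (fun m : Mor C => (R.obj m.2.1 : Type)) hh) r else 0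

/-- Multiplication of the skew category algebra. -/
noncomputable def skewMul (a b : SkewAlg k C R) : SkewAlg k C R :=
  ∑ g : Mor C, ∑ f : Mor C,
    if h : g.1 = f.2.1 then
      skSingle k C R (compMor g f h) (a g * R.map g.2.2 (R.map (eqToHom h.symm) (b f)))
    else 0

/-- The identity element of the skew category algebra. -/
noncomputable def skewOne : SkewAlg k C R :=
  ∑ x : C, skSingle k C R ⟨x, x, 𝟙 x⟩ 1

/-! With a single object `x₀`, the tensor power `⨂_x R(x)` is just `R(x₀)`, so both `R[C]` and
`R(x₀) ⊗ kC` are free `R(x₀)`-modules on the morphisms and `Ψ` matches the bases. For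
multiplicativity, `τ` moves the basis element `g` past `s ∈ R(x₀)` by applying `R(g)`, which is
exactly the skew rule `(r g)(s f) = (r R(g)(s)) (g f)`. -/

omit [Fintype C] [∀ x y : C, Fintype (x ⟶ y)] in
theorem skSingle_eq_piSingle (f : Mor C) (r : R.obj f.2.1) :
    skSingle k C R f r = Pi.single (M := fun g : Mor C => R.obj g.2.1) f r := by
  funext g
  by_cases hfg : f = g
  · subst hfg; simp [skSingle]
  · simp [skSingle, hfg]

theorem PiTensorProduct.subsingletonEquiv_symm_eq_tprod_update_one {S ι : Type*}
    [CommSemiring S] [DecidableEq ι] [Subsingleton ι] {A : ι → Type*} [∀ i, AddCommMonoid (A i)]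
    [∀ i, Module S (A i)] [∀ i, One (A i)] (i : ι) (r : A i) :
    (subsingletonEquiv (R := S) (s := A) i).symm r = tprod S (Function.update (fun _ => 1) i r) := by
  rw [LinearEquiv.symm_apply_eq, subsingletonEquiv_apply_tprod, Function.update_self]

noncomputable def skewAlgEquivPi [Subsingleton C] : SkewAlg k C R ≃ₗ[k] (Mor C → TensA k C R) :=
  LinearEquiv.piCongrRight fun f : Mor C =>
    (PiTensorProduct.subsingletonEquiv (R := k) (s := fun x : C => R.obj x) f.2.1).symm

omit [Fintype C] [∀ x y : C, Fintype (x ⟶ y)] in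
theorem skewAlgEquivPi_skSingle [Subsingleton C] (f : Mor C) (r : R.obj f.2.1) :
    skewAlgEquivPi k C R (skSingle k C R f r) =
      Pi.single f
        (PiTensorProduct.tprod k (Function.update (fun x : C => (1 : R.obj x)) f.2.1 r)) := by
  rw [skSingle_eq_piSingle, ← PiTensorProduct.subsingletonEquiv_symm_eq_tprod_update_one]
  exact funext <| Pi.apply_single (fun g => ((PiTensorProduct.subsingletonEquiv (R := k)
    (s := fun x : C => R.obj x) g.2.1).symm : R.obj g.2.1 → TensA k C R)) (fun _ => map_zero _) f r

noncomputable def skewAlgEquivTensor [Subsingleton C] :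
    SkewAlg k C R ≃ₗ[k] TensA k C R ⊗[k] CatAlg k C :=
  skewAlgEquivPi k C R ≪≫ₗ (Finsupp.linearEquivFunOnFinite k (TensA k C R) (Mor C)).symm ≪≫ₗ
    (TensorProduct.finsuppScalarRight k k (TensA k C R) (Mor C)).symm

theorem skewAlgEquivTensor_skSingle [Subsingleton C] (f : Mor C) (r : R.obj f.2.1) :
    skewAlgEquivTensor k C R (skSingle k C R f r) =
      PiTensorProduct.tprod k (Function.update (fun x : C => (1 : R.obj x)) f.2.1 r) ⊗ₜ
        Finsupp.single f 1 := by
  rw [skewAlgEquivTensor, LinearEquiv.trans_apply, LinearEquiv.trans_apply,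
    skewAlgEquivPi_skSingle, Finsupp.linearEquivFunOnFinite_symm_single,
    finsuppScalarRight_symm_apply_single]

omit [Fintype C] [∀ x y : C, Fintype (x ⟶ y)] [DecidableEq C] in
theorem muTau_tmul_tmul {A B : Type} [AddCommGroup A] [AddCommGroup B] [Module k A] [Module k B]
    (μA : A ⊗[k] A →ₗ[k] A) (μB : B ⊗[k] B →ₗ[k] B) (τ : B ⊗[k] A →ₗ[k] A ⊗[k] B)
    {a a' a'' : A} {b b' b'' : B} (h : τ (b ⊗ₜ a') = a'' ⊗ₜ b'') :
    muTau k μA μB τ ((a ⊗ₜ b) ⊗ₜ (a' ⊗ₜ b')) = μA (a ⊗ₜ a'') ⊗ₜ μB (b'' ⊗ₜ b') := by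
  simp [muTau, h]

omit [Fintype C] [∀ x y : C, Fintype (x ⟶ y)] [∀ x y : C, DecidableEq (x ⟶ y)] in
theorem muB_single_single (g f : Mor C) :
    muB k C (Finsupp.single g 1 ⊗ₜ Finsupp.single f 1) = catMulSingle k C g f := by
  simp [muB, catMulL]

theorem sum_skSingle (a : SkewAlg k C R) : ∑ f : Mor C, skSingle k C R f (a f) = a := by
  simp only [skSingle_eq_piSingle]
  exact Finset.univ_sum_single a

section Embedding

variable {k C R}
variable (Ψ : SkewAlg k C R →ₗ[k] TensA k C R ⊗[k] CatAlg k C)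
  (hΨ : ∀ (f : Mor C) (r : R.obj f.2.1), Ψ (skSingle k C R f r) =
    PiTensorProduct.tprod k (Function.update (fun x : C => (1 : R.obj x)) f.2.1 r) ⊗ₜ
      Finsupp.single f 1)
include hΨ

omit [∀ x y : C, Fintype (x ⟶ y)] in
theorem map_skewOne_of_map_skSingle :
    Ψ (skewOne k C R) = PiTensorProduct.tprod k (fun x : C => (1 : R.obj x)) ⊗ₜ catOne k C := by
  simp only [skewOne, catOne, map_sum, hΨ, tmul_sum, Function.update_eq_self_iff.2 rfl]

omit [Fintype C] [∀ x y : C, Fintype (x ⟶ y)] in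
theorem map_skSingle_comp_endo
    (τ : CatAlg k C ⊗[k] TensA k C R →ₗ[k] TensA k C R ⊗[k] CatAlg k C)
    (hτ : TauFormula k C R τ) {x : C} (g f : x ⟶ x) (r s : R.obj x) :
    Ψ (skSingle k C R ⟨x, x, f ≫ g⟩ (r * R.map g s)) =
      muTau k (muA k C R) (muB k C) τ
        (Ψ (skSingle k C R ⟨x, x, g⟩ r) ⊗ₜ Ψ (skSingle k C R ⟨x, x, f⟩ s)) := by
  have hτgs : τ (Finsupp.single ⟨x, x, g⟩ 1 ⊗ₜ
      PiTensorProduct.tprod k (Function.update (fun y : C => (1 : R.obj y)) x s)) =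
      PiTensorProduct.tprod k (Function.update (fun y : C => (1 : R.obj y)) x (R.map g s)) ⊗ₜ
        Finsupp.single ⟨x, x, g⟩ 1 := by
    rw [hτ, Function.update_idem, Function.update_self]
  rw [hΨ, hΨ, hΨ, muTau_tmul_tmul k _ _ _ hτgs, muA, LinearMap.mul'_apply,
    PiTensorProduct.tprod_mul_tprod, muB_single_single, catMulSingle, dif_pos rfl,
    ← Function.update_mul]
  simp [compMor, Pi.mul_def]

theorem map_skewMul_of_map_skSingle [Subsingleton C]
    (τ : CatAlg k C ⊗[k] TensA k C R →ₗ[k] TensA k C R ⊗[k] CatAlg k C)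
    (hτ : TauFormula k C R τ) (a b : SkewAlg k C R) :
    Ψ (skewMul k C R a b) = muTau k (muA k C R) (muB k C) τ (Ψ a ⊗ₜ Ψ b) := by
  conv_rhs => rw [← sum_skSingle k C R a, ← sum_skSingle k C R b]
  simp only [skewMul, map_sum, sum_tmul]
  simp only [tmul_sum, map_sum]
  refine Finset.sum_congr rfl fun ⟨x, y, g⟩ _ => Finset.sum_congr rfl fun ⟨x', y', f⟩ _ => ?_
  obtain rfl : x = y := Subsingleton.elim _ _
  obtain rfl : x = x' := Subsingleton.elim _ _
  obtain rfl : x = y' := Subsingleton.elim _ _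
  rw [dif_pos rfl, ← map_skSingle_comp_endo Ψ hΨ τ hτ]
  simp only [compMor, eqToHom_refl]
  rw [Category.id_comp, R.map_id]
  rfl

end Embedding

/-- if `C` has exactly one object (i.e. is a finite monoid), then the
embedding `Ψ : R[C] → R(x) ⊗_τ kC` is an isomorphism of `k`-algebras. -/
theorem skew_iso_twisted_of_single_object
    (x₀ : C) (hx : ∀ y : C, y = x₀)
    (τ : CatAlg k C ⊗[k] TensA k C R →ₗ[k] TensA k C R ⊗[k] CatAlg k C)
    (hτ : TauFormula k C R τ) :
    ∃ Ψ : SkewAlg k C R →ₗ[k] TensA k C R ⊗[k] CatAlg k C,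
      (∀ (f : Mor C) (r : R.obj f.2.1),
        Ψ (skSingle k C R f r) =
          (PiTensorProduct.tprod k
            (Function.update (fun x : C => (1 : R.obj x)) f.2.1 r)) ⊗ₜ Finsupp.single f 1) ∧
      Function.Bijective Ψ ∧
      Ψ (skewOne k C R) =
        (PiTensorProduct.tprod k fun x : C => (1 : R.obj x)) ⊗ₜ catOne k C ∧
      (∀ a b : SkewAlg k C R,
        Ψ (skewMul k C R a b) = muTau k (muA k C R) (muB k C) τ (Ψ a ⊗ₜ Ψ b)) := by
  have : Subsingleton C := ⟨fun y z => (hx y).trans (hx z).symm⟩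
  have hΨ := skewAlgEquivTensor_skSingle k C R
  exact ⟨skewAlgEquivTensor k C R, hΨ, (skewAlgEquivTensor k C R).bijective,
    map_skewOne_of_map_skSingle _ hΨ, map_skewMul_of_map_skSingle _ hΨ τ hτ⟩
end

section
/- The surjective Turull induction IndT^C_{s,D}(S) : C → k-Alg, defined on objects by IndT(x') = M_S(x) where s(x)=x', and on a morphism g : x' → y' by IndT(g)(m) = S(f)(m) for any f ∈ Mor D with s(f)=g, is a well-defined covariant functor into k-algebras, i.e., each IndT(g) : M_S(x) → M_S(y) is a unital k-algebra homomorphism and the assignment is functorial. -/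
open CategoryTheory

variable (k : Type) [Field k]

variable (D : Type) [SmallCategory D] [Fintype D] [DecidableEq D]
  [∀ x y : D, Fintype (x ⟶ y)] [∀ x y : D, DecidableEq (x ⟶ y)]
variable (C : Type) [SmallCategory C] [Fintype C] [DecidableEq C]
  [∀ x y : C, Fintype (x ⟶ y)] [∀ x y : C, DecidableEq (x ⟶ y)]

/-- The action of a functor `s : D ⥤ C` on the set of morphisms. -/
def sMor {D C : Type} [SmallCategory D] [SmallCategory C] (s : D ⥤ C) (f : Mor D) : Mor C :=
  ⟨s.obj f.1, s.obj f.2.1, s.map f.2.2⟩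

variable (S : D ⥤ AlgCat k) (s : D ⥤ C)

/-- `M_S(x)`: the set of `m ∈ S(x)` such that `S(f)(m) = S(g)(m)` for all `f` with
`d(f) = x` and all `g` with `s(g) = s(f)` (the equality of values being recorded as an
equality in `Σ w, S(w)`, since `f` and `g` may a priori have different codomains). -/
def MS (x : D) : Set (S.obj x) :=
  {m | ∀ (y z : D) (f : x ⟶ y) (g : x ⟶ z),
    sMor s ⟨x, y, f⟩ = sMor s ⟨x, z, g⟩ →
    (⟨y, S.map f m⟩ : Σ w : D, S.obj w) = ⟨z, S.map g m⟩}

section Lifts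

variable {k : Type} [Field k] {C D : Type} [SmallCategory C] [SmallCategory D]
  {S : D ⥤ AlgCat k} (s : D ⥤ C)

theorem sMor_mk_eq_mk_iff {x y : D} {f g : x ⟶ y} :
    sMor s ⟨x, y, f⟩ = sMor s ⟨x, y, g⟩ ↔ s.map f = s.map g := by
  simp [sMor]

theorem sMor_comp_eq_of_eq (hinj : Function.Injective s.obj) {x y z w : D} (f : x ⟶ y)
    {g : y ⟶ z} {h : y ⟶ w} (hgh : sMor s ⟨y, z, g⟩ = sMor s ⟨y, w, h⟩) :
    sMor s ⟨x, z, f ≫ g⟩ = sMor s ⟨x, w, f ≫ h⟩ := by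
  obtain rfl : z = w := hinj (congrArg (·.2.1) hgh)
  rw [sMor_mk_eq_mk_iff] at hgh ⊢
  simp [hgh]

theorem map_mem_MS (hinj : Function.Injective s.obj) {x y : D} (f : x ⟶ y) {m : S.obj x}
    (hm : m ∈ MS k D C S s x) : S.map f m ∈ MS k D C S s y := by
  intro z w g h hgh
  simpa using hm z w (f ≫ g) (f ≫ h) (sMor_comp_eq_of_eq s hinj f hgh)

end Lifts

theorem IndT_is_precosheaf (hinj : Function.Injective s.obj) :
    -- independence of the lift
    (∀ (x y z : D) (f₁ : x ⟶ y) (f₂ : x ⟶ z),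
      sMor s ⟨x, y, f₁⟩ = sMor s ⟨x, z, f₂⟩ →
      ∀ m ∈ MS k D C S s x,
        (⟨y, S.map f₁ m⟩ : Σ w : D, S.obj w) = ⟨z, S.map f₂ m⟩) ∧
    -- each `IndT(g) : M_S(x) → M_S(y)` is well defined ...
    (∀ (x y : D) (f : x ⟶ y), ∀ m ∈ MS k D C S s x, S.map f m ∈ MS k D C S s y) ∧
    -- ... and is a unital `k`-algebra homomorphism
    (∀ (x y : D) (f : x ⟶ y),
      S.map f (1 : S.obj x) = 1 ∧
      (∀ m m' : S.obj x, S.map f (m * m') = S.map f m * S.map f m') ∧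
      (∀ (c : k) (m m' : S.obj x), S.map f (c • m + m') = c • S.map f m + S.map f m')) ∧
    -- functoriality
    (∀ (x : D) (m : S.obj x), S.map (𝟙 x) m = m) ∧
    (∀ (x y z : D) (f : x ⟶ y) (g : y ⟶ z) (m : S.obj x),
      S.map (f ≫ g) m = S.map g (S.map f m)) := by
  refine ⟨fun x y z f₁ f₂ h m hm => hm y z f₁ f₂ h, fun x y f m => map_mem_MS s hinj f,
    fun x y f => ⟨map_one (S.map f).hom, map_mul (S.map f).hom, fun c m m' => ?_⟩,
    fun x m => by simp, fun x y z f g m => by simp⟩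
  rw [map_add, map_smul]
end
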